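/- Let R_1,…,R_n ∈ ℓ²(ℕ, ℝ) ⊆ ℓ²(ℕ, ℂ) be vectors with real coordinates and ‖R_j‖ ≤ 1 for all j, and let A = (a_{jk}) be any complex n×n matrix. Then the Varopoulos operators T_{R_1},…,T_{R_n} pairwise commute, each T_{R_j} is a contraction (‖T_{R_j}‖ ≤ 1), and ‖Σ_{j,k=1}^n a_{jk} T_{R_j} T_{R_k}‖ = |Σ_{j,k=1}^n a_{jk} ⟨R_j, R_k⟩|, where ⟨R_j, R_k⟩ = Σ_i R_j(i) R_k(i). -/

import Mathlib

noncomputable section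

open scoped ComplexConjugate

/-- The Hilbert space `ℓ²(ℕ, ℂ)`. -/
abbrev H2 : Type := lp (fun _ : ℕ => ℂ) 2

/-- The pairing `[x♯, y] = Σᵢ xᵢ yᵢ` for `x, y ∈ ℓ²(ℕ, ℂ)`. -/
def sharpPair (x y : H2) : ℂ := ∑' i, x i * y i

/-- The coordinatewise complex conjugate of an element of `ℓ²(ℕ, ℂ)`. -/
def conjH (x : H2) : H2 :=
  ⟨fun i => conj (x i), by
    show Memℓp (fun i => conj (x i)) 2
    have hx : Memℓp (fun i => x i) 2 := lp.memℓp x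
    rw [memℓp_gen_iff (by norm_num)] at hx ⊢
    simpa using hx⟩

lemma conjH_apply (x : H2) (i : ℕ) : conjH x i = conj (x i) := rfl

lemma summable_sharp (x y : H2) : Summable fun i => x i * y i := by
  have h := lp.summable_inner (𝕜 := ℂ) (conjH x) y
  refine h.congr fun i => ?_
  simp [conjH_apply, RCLike.inner_apply, mul_comm]

lemma sharpPair_eq_inner (x y : H2) : sharpPair x y = inner ℂ (conjH x) y := by
  rw [lp.inner_eq_tsum]
  refine tsum_congr fun i => ?_
  simp [conjH_apply, RCLike.inner_apply, sharpPair, mul_comm]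

lemma norm_conjH (x : H2) : ‖conjH x‖ = ‖x‖ := by
  rw [lp.norm_eq_tsum_rpow (by norm_num) (conjH x), lp.norm_eq_tsum_rpow (by norm_num) x]
  congr 1
  refine tsum_congr fun i => ?_
  simp [conjH_apply]

lemma norm_sharpPair_le (x y : H2) : ‖sharpPair x y‖ ≤ ‖x‖ * ‖y‖ := by
  rw [sharpPair_eq_inner]
  calc ‖(inner ℂ (conjH x) y : ℂ)‖ ≤ ‖conjH x‖ * ‖y‖ := norm_inner_le_norm (𝕜 := ℂ) (conjH x) y
    _ = ‖x‖ * ‖y‖ := by rw [norm_conjH]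

/-- The Varopoulos operator `T_{x,y}` on `ℂ ⊕ ℓ² ⊕ ℂ`. -/
def VarOp (x y : H2) : (ℂ × H2 × ℂ) →L[ℂ] (ℂ × H2 × ℂ) :=
  LinearMap.mkContinuousOfExistsBound
    { toFun := fun p => (sharpPair x p.2.1, p.2.2 • y, 0)
      map_add' := by
        intro p q
        have : sharpPair x (p.2.1 + q.2.1) = sharpPair x p.2.1 + sharpPair x q.2.1 := by
          unfold sharpPair
          rw [← Summable.tsum_add (summable_sharp x p.2.1) (summable_sharp x q.2.1)]
          refine tsum_congr fun i => ?_
          rw [lp.coeFn_add]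
          ring_nf
          simp [mul_add]
        simp [Prod.ext_iff, this, add_smul]
      map_smul' := by
        intro c p
        have : sharpPair x (c • p.2.1) = c * sharpPair x p.2.1 := by
          unfold sharpPair
          rw [← tsum_mul_left]
          refine tsum_congr fun i => ?_
          rw [lp.coeFn_smul]
          simp
          ring
        simp [Prod.ext_iff, this, smul_smul, mul_comm] }
    ⟨‖x‖ + ‖y‖, by
      intro p
      have hn1 : ‖p.2.1‖ ≤ ‖p‖ := (norm_fst_le p.2).trans (norm_snd_le p)
      have hn2 : ‖p.2.2‖ ≤ ‖p‖ := (norm_snd_le p.2).trans (norm_snd_le p)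
      have h1 : ‖sharpPair x p.2.1‖ ≤ ‖x‖ * ‖p‖ :=
        (norm_sharpPair_le x p.2.1).trans
          (mul_le_mul_of_nonneg_left hn1 (norm_nonneg x))
      have h2 : ‖p.2.2 • y‖ ≤ ‖y‖ * ‖p‖ := by
        rw [norm_smul]
        calc ‖p.2.2‖ * ‖y‖ ≤ ‖p‖ * ‖y‖ :=
              mul_le_mul_of_nonneg_right hn2 (norm_nonneg y)
          _ = ‖y‖ * ‖p‖ := mul_comm _ _
      have hpn : (0:ℝ) ≤ ‖p‖ := norm_nonneg p
      have hxn : (0:ℝ) ≤ ‖x‖ := norm_nonneg x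
      have hyn : (0:ℝ) ≤ ‖y‖ := norm_nonneg y
      show ‖((sharpPair x p.2.1 : ℂ), ((p.2.2 • y : H2), (0:ℂ)))‖ ≤ (‖x‖ + ‖y‖) * ‖p‖
      rw [Prod.norm_def, Prod.norm_def, norm_zero]
      refine max_le ?_ (max_le ?_ (by positivity))
      · nlinarith [mul_le_mul_of_nonneg_right hyn hpn]
      · nlinarith [mul_le_mul_of_nonneg_right hxn hpn]⟩

lemma sharpPair_smul_right (x : H2) (c : ℂ) (y : H2) :
    sharpPair x (c • y) = c * sharpPair x y := by
  rw [sharpPair_eq_inner, sharpPair_eq_inner, inner_smul_right]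

lemma sharpPair_zero_right (x : H2) : sharpPair x 0 = 0 := by
  rw [sharpPair_eq_inner, inner_zero_right]

lemma sharpPair_comm (x y : H2) : sharpPair x y = sharpPair y x :=
  tsum_congr fun i => mul_comm _ _

lemma VarOp_apply (x y : H2) (p : ℂ × H2 × ℂ) :
    VarOp x y p = (sharpPair x p.2.1, p.2.2 • y, 0) := rfl

lemma VarOp_comp_apply (x z : H2) (p : ℂ × H2 × ℂ) :
    (VarOp x x).comp (VarOp z z) p = (p.2.2 * sharpPair x z, 0, 0) := by
  simp [VarOp_apply, sharpPair_smul_right, sharpPair_zero_right]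

/-- Gupta–Ray, proof of Theorem 2.7.  For vectors `R₁, …, R_n ∈ ℓ²(ℕ, ℂ)`
with real coordinates and norm at most one, the Varopoulos operators `T_{R_j}` pairwise
commute, each is a contraction, and
`‖Σ_{j,k} a_{jk} T_{R_j} T_{R_k}‖ = |Σ_{j,k} a_{jk} ⟨R_j, R_k⟩|` for every complex matrix
`A = (a_{jk})`, where `⟨R_j, R_k⟩ = Σᵢ R_j(i) R_k(i)`. -/
theorem stmt7 (n : ℕ) (A : Matrix (Fin n) (Fin n) ℂ) (R : Fin n → H2)
    (hreal : ∀ j i, (R j i).im = 0) (hnorm : ∀ j, ‖R j‖ ≤ 1) :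
    (∀ j k, (VarOp (R j) (R j)).comp (VarOp (R k) (R k)) =
        (VarOp (R k) (R k)).comp (VarOp (R j) (R j))) ∧
    (∀ j, ‖VarOp (R j) (R j)‖ ≤ 1) ∧
    ‖∑ j, ∑ k, A j k • (VarOp (R j) (R j)).comp (VarOp (R k) (R k))‖ =
      ‖∑ j, ∑ k, A j k * sharpPair (R j) (R k)‖ := by
  refine ⟨?_, ?_, ?_⟩
  · intro j k
    refine ContinuousLinearMap.ext fun p => ?_
    rw [VarOp_comp_apply, VarOp_comp_apply, sharpPair_comm]
  · intro j
    refine ContinuousLinearMap.opNorm_le_bound _ zero_le_one fun p => ?_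
    rw [one_mul, VarOp_apply]
    have hn1 : ‖p.2.1‖ ≤ ‖p‖ := (norm_fst_le p.2).trans (norm_snd_le p)
    have hn2 : ‖p.2.2‖ ≤ ‖p‖ := (norm_snd_le p.2).trans (norm_snd_le p)
    have h1 : ‖sharpPair (R j) p.2.1‖ ≤ ‖p‖ := by
      calc ‖sharpPair (R j) p.2.1‖ ≤ ‖R j‖ * ‖p.2.1‖ := norm_sharpPair_le _ _
        _ ≤ 1 * ‖p‖ := mul_le_mul (hnorm j) hn1 (norm_nonneg _) zero_le_one
        _ = ‖p‖ := one_mul _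
    have h2 : ‖p.2.2 • R j‖ ≤ ‖p‖ := by
      rw [norm_smul]
      calc ‖p.2.2‖ * ‖R j‖ ≤ ‖p‖ * 1 :=
            mul_le_mul hn2 (hnorm j) (norm_nonneg _) (norm_nonneg _)
        _ = ‖p‖ := mul_one _
    rw [Prod.norm_def, Prod.norm_def, norm_zero]
    exact max_le h1 (max_le h2 (norm_nonneg p))
  · set c : ℂ := ∑ j, ∑ k, A j k * sharpPair (R j) (R k) with hc
    have hterm : ∀ (j k : Fin n) (p : ℂ × H2 × ℂ),
        (A j k • (VarOp (R j) (R j)).comp (VarOp (R k) (R k))) p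
          = ((A j k * sharpPair (R j) (R k)) * p.2.2, 0, 0) := by
      intro j k p
      rw [ContinuousLinearMap.smul_apply, VarOp_comp_apply]
      refine Prod.ext ?_ (Prod.ext ?_ ?_) <;> simp [smul_eq_mul] <;> ring
    have hS : ∀ p : ℂ × H2 × ℂ,
        (∑ j, ∑ k, A j k • (VarOp (R j) (R j)).comp (VarOp (R k) (R k))) p
          = (c * p.2.2, 0, 0) := by
      intro p
      simp only [ContinuousLinearMap.sum_apply, hterm]
      refine Prod.ext ?_ (Prod.ext ?_ ?_) <;>
        simp [Prod.fst_sum, Prod.snd_sum, hc, Finset.sum_mul]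
    apply le_antisymm
    · refine ContinuousLinearMap.opNorm_le_bound _ (by positivity) fun p => ?_
      rw [hS p, Prod.norm_def, Prod.norm_def, norm_zero, norm_zero]
      have hn2 : ‖p.2.2‖ ≤ ‖p‖ := (norm_snd_le p.2).trans (norm_snd_le p)
      refine max_le ?_ (max_le (by positivity) (by positivity))
      rw [norm_mul]
      calc ‖c‖ * ‖p.2.2‖ ≤ ‖c‖ * ‖p‖ :=
            mul_le_mul_of_nonneg_left hn2 (norm_nonneg c)
        _ = ‖c‖ * ‖p‖ := rfl
    · have h1 : ‖((0 : ℂ), ((0 : H2), (1 : ℂ)))‖ = 1 := by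
        rw [Prod.norm_def, Prod.norm_def, norm_zero, norm_zero, norm_one]
        simp
      calc (‖c‖ : ℝ)
          = ‖((c * 1 : ℂ), ((0 : H2), (0 : ℂ)))‖ := by
            rw [Prod.norm_def, Prod.norm_def, norm_zero, norm_zero, mul_one]
            simp [norm_nonneg]
        _ = ‖(∑ j, ∑ k, A j k • (VarOp (R j) (R j)).comp (VarOp (R k) (R k)))
              ((0 : ℂ), ((0 : H2), (1 : ℂ)))‖ := by rw [hS]
        _ ≤ ‖∑ j, ∑ k, A j k • (VarOp (R j) (R j)).comp (VarOp (R k) (R k))‖ * 1 := by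
            rw [← h1]
            exact ContinuousLinearMap.le_opNorm _ _
        _ = _ := mul_one _

end
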